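/- arXiv:1905.08507 — 2 statements merged into one kernel-verified Lean document; each statement's English description precedes it below -/
import Mathlib

section
/- Variance reduction for Gaussian restricted to a cell: Let σ be the Gaussian measure on ℝ with density y ↦ e^{−(y−x)²/(2ε)} (x ∈ ℝ, ε > 0), and let L ⊂ ℝ be an interval such that σ(L) = 1/N. Then the variance of the normalized restriction N·σ|_L is bounded above by the variance of σ: N·∫_L (y − β)² dσ(y) ≤ ε, where β = N·∫_L y dσ(y) is the barycenter of σ restricted to L. -/
open MeasureTheory Set Filter Topology
open scoped ENNReal

local notation "⟪" x ", " y "⟫" => @inner ℝ _ _ x y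

noncomputable section

namespace PaperOT

variable {E : Type*} [NormedAddCommGroup E] [InnerProductSpace ℝ E]
  [MeasureSpace E] [BorelSpace E]

/-- `π` is a coupling (transport plan) between `μ` and `ν`. -/
def IsCoupling (π : Measure (E × E)) (μ ν : Measure E) : Prop :=
  π.map Prod.fst = μ ∧ π.map Prod.snd = ν

/-- Squared 2-Wasserstein distance between two measures. -/
def W2sq (μ ν : Measure E) : ℝ :=
  sInf {c : ℝ | ∃ π : Measure (E × E), IsCoupling π μ ν ∧ c = ∫ p, ‖p.1 - p.2‖ ^ 2 ∂π}

/-- 2-Wasserstein distance. -/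
def W2 (μ ν : Measure E) : ℝ := Real.sqrt (W2sq μ ν)

/-- Empirical (uniform) measure associated to a configuration of `N` points;
an element of `𝒫_N`. -/
def empMeasure {N : ℕ} (X : Fin N → E) : Measure E :=
  (N : ℝ≥0∞)⁻¹ • ∑ i, Measure.dirac (X i)

/-- The congestion constraint set `K`: absolutely continuous probability measures on `Ω`
with density bounded by `1` (equivalently `ρ ≤ Leb⌞Ω`). -/
def constraintK (Ω : Set E) : Set (Measure E) :=
  {ρ | IsProbabilityMeasure ρ ∧ ρ ≤ volume.restrict Ω}

/-- `σ` is the `W₂`-projection of `μ` on the constraint set `K`. -/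
def IsW2ProjOnK (Ω : Set E) (μ σ : Measure E) : Prop :=
  σ ∈ constraintK Ω ∧ ∀ τ ∈ constraintK Ω, W2sq μ σ ≤ W2sq μ τ

/-- `T` is an optimal transport map from `σ` to `μ` for the quadratic cost. -/
def IsOptimalMap (T : E → E) (σ μ : Measure E) : Prop :=
  Measurable T ∧ σ.map T = μ ∧ ∫ x, ‖x - T x‖ ^ 2 ∂σ = W2sq σ μ

/-- Barycenter `βᵢ = N ∫_{Lᵢ} x dσ(x)` of the Laguerre cell `Lᵢ = T⁻¹(xᵢ)`. -/
def cellBary {N : ℕ} (σ : Measure E) (T : E → E) (X : Fin N → E) (i : Fin N) : E :=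
  (N : ℝ) • ∫ x in T ⁻¹' {X i}, x ∂σ

/-- Divergence of a vector field (trace of its derivative). -/
def divergence (ξ : E → E) (x : E) : ℝ :=
  LinearMap.trace ℝ E (fderiv ℝ ξ x).toLinearMap

/-- `g` is the weak (distributional) gradient of `f` on `Ω`. -/
def HasWeakGradOn (f : E → ℝ) (g : E → E) (Ω : Set E) : Prop :=
  ∀ ξ : E → E, ContDiff ℝ 1 ξ → HasCompactSupport ξ → tsupport ξ ⊆ interior Ω →
    ∫ x in Ω, f x * divergence ξ x = - ∫ x in Ω, ⟪g x, ξ x⟫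

/-- Absolutely continuous probability measures concentrated on `Ω`. -/
def ProbACOn (Ω : Set E) : Set (Measure E) :=
  {ρ | IsProbabilityMeasure ρ ∧ ρ ≪ (volume : Measure E) ∧ ρ Ωᶜ = 0}

/-- Boltzmann entropy `∫ ρ log ρ` of an absolutely continuous measure. -/
def Ent (ρ : Measure E) : ℝ :=
  ∫ x, Real.log ((ρ.rnDeriv volume x).toReal) ∂ρ

/-- The Moreau–Yosida objective for the entropy: `(1/2ε) W₂²(μ,σ) + Ent(σ)`. -/
def entObj (ε : ℝ) (μ σ : Measure E) : ℝ := (1 / (2 * ε)) * W2sq μ σ + Ent σ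

/-- `σ` is the minimizer defining the Moreau–Yosida regularization `H_ε(μ)` of the entropy. -/
def IsEntMYMin (Ω : Set E) (ε : ℝ) (μ σ : Measure E) : Prop :=
  σ ∈ ProbACOn Ω ∧ ∀ τ ∈ ProbACOn Ω, entObj ε μ σ ≤ entObj ε μ τ

/-- Moreau–Yosida regularization of the entropy, as a function of the particle positions. -/
def HepsConf (Ω : Set E) (ε : ℝ) {N : ℕ} (X : Fin N → E) : ℝ :=
  sInf {c : ℝ | ∃ σ ∈ ProbACOn Ω, c = entObj ε (empMeasure X) σ}

/-- Superdifferential of a `lam`-semiconcave function. -/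
def superdiff (lam : ℝ) (F : E → ℝ) (x : E) : Set E :=
  {p | ∀ y, F y ≤ F x + ⟪p, y - x⟫ + lam * ‖y - x‖ ^ 2}

/-- The Laguerre cell of the point `X i` with respect to `Ω`, for the weights `ψ`. -/
def laguerreCell {N : ℕ} (Ω : Set E) (X : Fin N → E) (ψ : Fin N → ℝ) (i : Fin N) : Set E :=
  {x ∈ Ω | ∀ j, ‖x - X i‖ ^ 2 - ψ i ≤ ‖x - X j‖ ^ 2 - ψ j}

variable [CompleteSpace E]

/-- Weak solution of the crowd-motion system
`∂ₜρ + div(ρ(−∇V−∇p)) = 0`, `ρ ≤ 1`, `p ≥ 0`, `p(1−ρ) = 0`,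
with no-flux boundary conditions on `Ω`, on the time interval `[0,T]`.
The pressure `p` lies in `L²([0,T];H¹(Ω))` with weak spatial gradient `q`,
and `p(1−ρ)=0` is encoded by `∫_Ω p dx = ∫ p dρ` (using `p ≥ 0`, `ρ ≤ 1`). -/
def IsWeakSolCrowd (Ω : Set E) (V : E → ℝ) (T : ℝ) (ρ : ℝ → Measure E) : Prop :=
  (∀ t ∈ Icc (0:ℝ) T, ρ t ∈ constraintK Ω) ∧
  ∃ p : ℝ → E → ℝ, ∃ q : ℝ → E → E,
    (∀ t ∈ Icc (0:ℝ) T, ∀ x, 0 ≤ p t x) ∧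
    (∀ t ∈ Icc (0:ℝ) T, HasWeakGradOn (p t) (q t) Ω) ∧
    IntegrableOn (fun t => ∫ x in Ω, ((p t x) ^ 2 + ‖q t x‖ ^ 2)) (Ioo (0:ℝ) T) ∧
    (∀ t ∈ Icc (0:ℝ) T, ∫ x in Ω, p t x = ∫ x, p t x ∂(ρ t)) ∧
    ∀ φ : ℝ × E → ℝ, ContDiff ℝ 1 φ → HasCompactSupport φ →
      tsupport φ ⊆ Ioo (0:ℝ) T ×ˢ (univ : Set E) →
      ∫ t in Ioo (0:ℝ) T, ∫ x, (fderiv ℝ φ (t, x) (1, 0)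
          + fderiv ℝ φ (t, x) (0, -gradient V x - q t x)) ∂(ρ t) = 0

/-- Spatial gradient of a space-time test function. -/
def spaceGrad (φ : ℝ × E → ℝ) (t : ℝ) (x : E) : E := gradient (fun z => φ (t, z)) x

/-- Weak solution of the advection–diffusion equation
`∂ₜρ + div(ρ(−∇V−∇log ρ)) = 0` on `Ω` with no-flux boundary conditions,
in the distributional form `∫∫ (∂ₜφ − ∇φ·∇V + Δφ) dρ_t dt = 0`. -/
def IsWeakSolDiffusion (Ω : Set E) (V : E → ℝ) (T : ℝ) (ρ : ℝ → Measure E) : Prop :=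
  (∀ t ∈ Icc (0:ℝ) T,
      IsProbabilityMeasure (ρ t) ∧ ρ t ≪ (volume : Measure E) ∧ ρ t Ωᶜ = 0) ∧
  ∀ φ : ℝ × E → ℝ, ContDiff ℝ 2 φ → HasCompactSupport φ →
    tsupport φ ⊆ Ioo (0:ℝ) T ×ˢ (univ : Set E) →
    ∫ t in Ioo (0:ℝ) T, ∫ x,
      (fderiv ℝ φ (t, x) (1, 0) - ⟪spaceGrad φ t x, gradient V x⟫
        + divergence (spaceGrad φ t) x) ∂(ρ t) = 0


lemma gauss_integrable_quad (x ε A B C : ℝ) (hε : 0 < ε) :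
    Integrable (fun y : ℝ => (A * (y - x) ^ 2 + B * (y - x) + C)
      * Real.exp (-(y - x) ^ 2 / (2 * ε))) := by
  have hb : 0 < (2 * ε)⁻¹ := by positivity
  have h0 : Integrable (fun u : ℝ => Real.exp (-(2 * ε)⁻¹ * u ^ 2)) :=
    integrable_exp_neg_mul_sq hb
  have h1 : Integrable (fun u : ℝ => u * Real.exp (-(2 * ε)⁻¹ * u ^ 2)) :=
    integrable_mul_exp_neg_mul_sq hb
  have h2 : Integrable (fun u : ℝ => u ^ 2 * Real.exp (-(2 * ε)⁻¹ * u ^ 2)) := by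
    have h := integrable_rpow_mul_exp_neg_mul_sq hb (s := 2) (by norm_num)
    refine h.congr (Eventually.of_forall fun u => ?_)
    beta_reduce
    rw [Real.rpow_two]
  have base : Integrable (fun u : ℝ =>
      (A * u ^ 2 + B * u + C) * Real.exp (-(2 * ε)⁻¹ * u ^ 2)) := by
    have h := ((h2.const_mul A).add (h1.const_mul B)).add (h0.const_mul C)
    exact h.congr (Eventually.of_forall fun u => by simp only [Pi.add_apply]; ring)
  have comp := base.comp_sub_right x
  refine comp.congr (Eventually.of_forall fun y => ?_)
  beta_reduce
  rw [show -(2 * ε)⁻¹ * (y - x) ^ 2 = -(y - x) ^ 2 / (2 * ε) by ring]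

lemma gauss_tendsto_atTop (b d : ℝ) (hb : 0 < b) :
    Tendsto (fun u : ℝ => (u + d) * Real.exp (-b * u ^ 2)) atTop (𝓝 0) := by
  have hlim : Tendsto (fun u : ℝ => Real.exp (-(1 / 2) * u)) atTop (𝓝 0) := by
    have : Tendsto (fun u : ℝ => -(1 / 2) * u) atTop atBot :=
      Tendsto.const_mul_atTop_of_neg (by norm_num) tendsto_id
    exact Real.tendsto_exp_atBot.comp this
  have h1 : Tendsto (fun u : ℝ => u * Real.exp (-b * u ^ 2)) atTop (𝓝 0) := by
    have h := (rpow_mul_exp_neg_mul_sq_isLittleO_exp_neg hb 1).trans_tendsto hlim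
    refine h.congr fun u => by rw [Real.rpow_one]
  have h0 : Tendsto (fun u : ℝ => Real.exp (-b * u ^ 2)) atTop (𝓝 0) :=
    (exp_neg_mul_sq_isLittleO_exp_neg hb).trans_tendsto
      (Real.tendsto_exp_atBot.comp tendsto_neg_atTop_atBot)
  have h := h1.add ((h0.const_mul d))
  simp only [add_zero, mul_zero] at h
  exact h.congr fun u => by ring

lemma gauss_tendsto_atBot (b d : ℝ) (hb : 0 < b) :
    Tendsto (fun u : ℝ => (u + d) * Real.exp (-b * u ^ 2)) atBot (𝓝 0) := by
  have h := (gauss_tendsto_atTop b (-d) hb).comp tendsto_neg_atBot_atTop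
  have h2 := h.neg
  simp only [neg_zero] at h2
  refine h2.congr fun u => ?_
  simp only [Function.comp]
  rw [show -b * (-u) ^ 2 = -b * u ^ 2 by ring]
  ring

lemma gauss_aux (x ε : ℝ) (hε : 0 < ε) (N : ℕ) (hN : 0 < N)
    (L : Set ℝ) (hLmeas : MeasurableSet L) (hLint : OrdConnected L)
    (F : ℝ → ℝ) (hFdef : F = fun y => Real.exp (-(y - x) ^ 2 / (2 * ε)))
    (hmass : ∫ y in L, F y = 1 / N) :
    (N : ℝ) * ∫ y in L, (y - (N : ℝ) * ∫ z in L, z * F z) ^ 2 * F y ≤ ε := by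
  have hNR : (0 : ℝ) < N := by exact_mod_cast hN
  have hFpos : ∀ y, 0 < F y := fun y => by rw [hFdef]; exact Real.exp_pos _
  set β : ℝ := (N : ℝ) * ∫ z in L, z * F z with hβ
  have hquad : ∀ A B C : ℝ, Integrable (fun y => (A * (y - x) ^ 2 + B * (y - x) + C) * F y) := by
    intro A B C
    rw [hFdef]
    exact gauss_integrable_quad x ε A B C hε
  have hint_F : Integrable F :=
    (hquad 0 0 1).congr (Eventually.of_forall fun y => by ring)
  have hint_yF : Integrable (fun y => y * F y) :=
    (hquad 0 1 x).congr (Eventually.of_forall fun y => by ring)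
  have hint_lin : Integrable (fun y => (y - β) * F y) :=
    (hquad 0 1 (x - β)).congr (Eventually.of_forall fun y => by ring)
  have hint_G : Integrable (fun y => F y * (1 - (y - β) * (y - x) / ε)) :=
    (hquad (-(1 / ε)) (-((x - β) / ε)) 1).congr (Eventually.of_forall fun y => by ring)
  have hderiv : ∀ y, HasDerivAt (fun y => (y - β) * F y)
      (F y * (1 - (y - β) * (y - x) / ε)) y := by
    intro y
    have h1 : HasDerivAt (fun y : ℝ => -(y - x) ^ 2 / (2 * ε)) (-(y - x) / ε) y := by
      have hp : HasDerivAt (fun y : ℝ => (y - x) ^ 2) (2 * (y - x)) y := by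
        simpa using ((hasDerivAt_id y).sub_const x).fun_pow 2
      have h := hp.fun_neg.div_const (2 * ε)
      refine h.congr_deriv ?_
      field_simp
    have h2 : HasDerivAt F (F y * (-(y - x) / ε)) y := by
      rw [hFdef]
      simpa using h1.exp
    have h3 := ((hasDerivAt_id y).sub_const β).fun_mul h2
    refine h3.congr_deriv ?_
    simp only [id_eq]
    field_simp
    ring
  have hIz : ∫ z in L, z * F z = β / N := by rw [hβ]; field_simp
  have hzero : ∫ y in L, (y - β) * F y = 0 := by
    have he : (fun y => (y - β) * F y) = fun y => y * F y - β * F y := by funext y; ring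
    rw [he, integral_sub hint_yF.integrableOn ((hint_F.const_mul β).integrableOn),
      integral_const_mul, hIz, hmass]
    field_simp
    simp
  have hptwise : ∀ y, (y - β) ^ 2 * F y
      = (ε * F y - ε * (F y * (1 - (y - β) * (y - x) / ε))) + (x - β) * ((y - β) * F y) := by
    intro y
    field_simp
    ring
  have hsub_int : Integrable (fun y => ε * F y - ε * (F y * (1 - (y - β) * (y - x) / ε))) :=
    (hint_F.const_mul ε).sub (hint_G.const_mul ε)
  have hsplit : ∫ y in L, (y - β) ^ 2 * F y
      = ε * (1 / N) - ε * ∫ y in L, F y * (1 - (y - β) * (y - x) / ε) := by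
    calc ∫ y in L, (y - β) ^ 2 * F y
        = ∫ y in L, ((ε * F y - ε * (F y * (1 - (y - β) * (y - x) / ε)))
            + (x - β) * ((y - β) * F y)) :=
          setIntegral_congr_fun hLmeas fun y _ => hptwise y
      _ = ((∫ y in L, ε * F y) - ∫ y in L, ε * (F y * (1 - (y - β) * (y - x) / ε)))
            + (x - β) * ∫ y in L, (y - β) * F y := by
          rw [integral_add hsub_int.integrableOn ((hint_lin.const_mul (x - β)).integrableOn),
            integral_sub ((hint_F.const_mul ε).integrableOn) ((hint_G.const_mul ε).integrableOn),
            integral_const_mul (x - β) (fun y => (y - β) * F y)]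
      _ = ε * (1 / N) - ε * ∫ y in L, F y * (1 - (y - β) * (y - x) / ε) := by
          rw [integral_const_mul ε F, integral_const_mul ε
              (fun y => F y * (1 - (y - β) * (y - x) / ε)), hmass, hzero, mul_zero, add_zero]
  have hne : L.Nonempty := by
    by_contra h
    rw [not_nonempty_iff_eq_empty] at h
    rw [h] at hmass
    simp only [Measure.restrict_empty, integral_zero_measure] at hmass
    exact absurd hmass ((one_div_pos.mpr hNR).ne)
  obtain ⟨y₀, hy₀⟩ := hne
  have hb2 : 0 < (2 * ε)⁻¹ := by positivity
  have htop : Tendsto (fun y => (y - β) * F y) atTop (𝓝 0) := by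
    have base := gauss_tendsto_atTop ((2 * ε)⁻¹) (x - β) hb2
    have comp := base.comp (tendsto_atTop_add_const_right atTop (-x) tendsto_id)
    refine comp.congr fun y => ?_
    simp only [Function.comp_apply, id_eq, hFdef]
    rw [show y + -x + (x - β) = y - β by ring,
      show -(2 * ε)⁻¹ * (y + -x) ^ 2 = -(y - x) ^ 2 / (2 * ε) by ring]
  have hbot : Tendsto (fun y => (y - β) * F y) atBot (𝓝 0) := by
    have base := gauss_tendsto_atBot ((2 * ε)⁻¹) (x - β) hb2
    have comp := base.comp (tendsto_atBot_add_const_right atBot (-x) tendsto_id)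
    refine comp.congr fun y => ?_
    simp only [Function.comp_apply, id_eq, hFdef]
    rw [show y + -x + (x - β) = y - β by ring,
      show -(2 * ε)⁻¹ * (y + -x) ^ 2 = -(y - x) ^ 2 / (2 * ε) by ring]
  have hβ_le : ∀ b : ℝ, (∀ z ∈ L, z ≤ b) → β ≤ b := by
    intro b hb
    have hmono : ∫ z in L, z * F z ≤ ∫ z in L, b * F z := by
      refine setIntegral_mono_on hint_yF.integrableOn
        ((hint_F.const_mul b).integrableOn) hLmeas fun z hz => ?_
      exact mul_le_mul_of_nonneg_right (hb z hz) (hFpos z).le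
    rw [integral_const_mul, hmass] at hmono
    calc β = (N : ℝ) * ∫ z in L, z * F z := hβ
      _ ≤ (N : ℝ) * (b * (1 / N)) := mul_le_mul_of_nonneg_left hmono hNR.le
      _ = b := by field_simp
  have hβ_ge : ∀ a : ℝ, (∀ z ∈ L, a ≤ z) → a ≤ β := by
    intro a ha
    have hmono : ∫ z in L, a * F z ≤ ∫ z in L, z * F z := by
      refine setIntegral_mono_on ((hint_F.const_mul a).integrableOn)
        hint_yF.integrableOn hLmeas fun z hz => ?_
      exact mul_le_mul_of_nonneg_right (ha z hz) (hFpos z).le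
    rw [integral_const_mul, hmass] at hmono
    calc a = (N : ℝ) * (a * (1 / N)) := by field_simp
      _ ≤ (N : ℝ) * ∫ z in L, z * F z := mul_le_mul_of_nonneg_left hmono hNR.le
      _ = β := hβ.symm
  have hG0 : 0 ≤ ∫ y in L, F y * (1 - (y - β) * (y - x) / ε) := by
    by_cases hbb : BddBelow L <;> by_cases hba : BddAbove L
    · set a := sInf L with hadef
      set b := sSup L with hbdef
      have hab : a ≤ b := le_trans (csInf_le hbb hy₀) (le_csSup hba hy₀)
      have hsub : Ioo a b ⊆ L := by
        intro y hy
        obtain ⟨l, hl, hly⟩ := exists_lt_of_csInf_lt ⟨y₀, hy₀⟩ hy.1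
        obtain ⟨u, hu, hyu⟩ := exists_lt_of_lt_csSup ⟨y₀, hy₀⟩ hy.2
        exact hLint.out hl hu ⟨hly.le, hyu.le⟩
      have hsup : L ⊆ Icc a b := fun y hy => ⟨csInf_le hbb hy, le_csSup hba hy⟩
      have hae : L =ᵐ[volume] Ioo a b := by
        rw [ae_eq_set]
        constructor
        · refine measure_mono_null (fun y hy => ?_)
            (((Set.finite_singleton b).insert a).measure_zero volume)
          obtain ⟨hyL, hyn⟩ := hy
          have hIcc := hsup hyL
          rcases hIcc.1.eq_or_lt with h | h
          · exact Or.inl h.symm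
          · rcases hIcc.2.eq_or_lt with h' | h'
            · exact Or.inr h'
            · exact absurd ⟨h, h'⟩ hyn
        · refine measure_mono_null (fun y hy => ?_) (measure_empty (μ := volume))
          exact absurd (hsub hy.1) hy.2
      have hβa : a ≤ β := hβ_ge a fun z hz => csInf_le hbb hz
      have hβb : β ≤ b := hβ_le b fun z hz => le_csSup hba hz
      rw [setIntegral_congr_set hae, ← integral_Ioc_eq_integral_Ioo,
        ← intervalIntegral.integral_of_le hab,
        intervalIntegral.integral_eq_sub_of_hasDerivAt (fun y _ => hderiv y)
          hint_G.intervalIntegrable]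
      have h1 : 0 ≤ (b - β) * F b := mul_nonneg (by linarith) (hFpos b).le
      have h2 : (a - β) * F a ≤ 0 :=
        mul_nonpos_iff.mpr (Or.inr ⟨by linarith, (hFpos a).le⟩)
      try beta_reduce
      linarith
    · set a := sInf L with hadef
      have hsub : Ioi a ⊆ L := by
        intro y hy
        obtain ⟨l, hl, hly⟩ := exists_lt_of_csInf_lt ⟨y₀, hy₀⟩ hy
        obtain ⟨u, hu, hyu⟩ := not_bddAbove_iff.mp hba y
        exact hLint.out hl hu ⟨hly.le, hyu.le⟩
      have hae : L =ᵐ[volume] Ioi a := by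
        rw [ae_eq_set]
        constructor
        · refine measure_mono_null (fun y hy => ?_)
            (measure_singleton a)
          obtain ⟨hyL, hyn⟩ := hy
          have h' : a ≤ y := csInf_le hbb hyL
          simp only [mem_Ioi, not_lt] at hyn
          exact le_antisymm hyn h'
        · refine measure_mono_null (fun y hy => ?_) (measure_empty (μ := volume))
          exact absurd (hsub hy.1) hy.2
      have hβa : a ≤ β := hβ_ge a fun z hz => csInf_le hbb hz
      rw [setIntegral_congr_set hae,
        integral_Ioi_of_hasDerivAt_of_tendsto' (fun y _ => hderiv y)
          hint_G.integrableOn htop]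
      have h2 : (a - β) * F a ≤ 0 :=
        mul_nonpos_iff.mpr (Or.inr ⟨by linarith, (hFpos a).le⟩)
      try beta_reduce
      linarith
    · set b := sSup L with hbdef
      have hsub : Iio b ⊆ L := by
        intro y hy
        obtain ⟨u, hu, hyu⟩ := exists_lt_of_lt_csSup ⟨y₀, hy₀⟩ hy
        obtain ⟨l, hl, hly⟩ := not_bddBelow_iff.mp hbb y
        exact hLint.out hl hu ⟨hly.le, hyu.le⟩
      have hae : L =ᵐ[volume] Iic b := by
        rw [ae_eq_set]
        constructor
        · refine measure_mono_null (fun y hy => ?_) (measure_empty (μ := volume))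
          exact absurd (le_csSup hba hy.1) hy.2
        · refine measure_mono_null (fun y hy => ?_)
            (measure_singleton b)
          obtain ⟨hyb, hyn⟩ := hy
          rcases (mem_Iic.mp hyb).lt_or_eq with h | h
          · exact absurd (hsub h) hyn
          · exact h
      have hβb : β ≤ b := hβ_le b fun z hz => le_csSup hba hz
      rw [setIntegral_congr_set hae,
        integral_Iic_of_hasDerivAt_of_tendsto' (fun y _ => hderiv y)
          hint_G.integrableOn hbot]
      have h1 : 0 ≤ (b - β) * F b := mul_nonneg (by linarith) (hFpos b).le
      try beta_reduce
      linarith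
    · have huniv : L = univ := by
        refine eq_univ_of_forall fun y => ?_
        obtain ⟨l, hl, hly⟩ := not_bddBelow_iff.mp hbb y
        obtain ⟨u, hu, hyu⟩ := not_bddAbove_iff.mp hba y
        exact hLint.out hl hu ⟨hly.le, hyu.le⟩
      rw [huniv, setIntegral_univ,
        integral_of_hasDerivAt_of_tendsto hderiv hint_G hbot htop]
      simp
  rw [hsplit]
  have hprod : 0 ≤ (N : ℝ) * (ε * ∫ y in L, F y * (1 - (y - β) * (y - x) / ε)) :=
    mul_nonneg hNR.le (mul_nonneg hε.le hG0)
  have hNe : (N : ℝ) * (ε * (1 / N)) = ε := by field_simp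
  calc (N : ℝ) * (ε * (1 / N) - ε * ∫ y in L, F y * (1 - (y - β) * (y - x) / ε))
      = (N : ℝ) * (ε * (1 / N))
        - (N : ℝ) * (ε * ∫ y in L, F y * (1 - (y - β) * (y - x) / ε)) := by ring
    _ ≤ (N : ℝ) * (ε * (1 / N)) := by linarith
    _ = ε := hNe

/-- Lemma 4.3 of the paper, after Kanter: if `σ` is the Gaussian measure
with density `y ↦ e^{−(y−x)²/(2ε)}` and `L` is an interval with `σ(L) = 1/N`, then the
variance of `N·σ|_L` is bounded by the variance `ε` of the Gaussian:
`N ∫_L (y−β)² dσ(y) ≤ ε`, where `β = N ∫_L y dσ(y)`. -/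
theorem gaussian_cell_variance_le (x ε : ℝ) (hε : 0 < ε) (N : ℕ) (hN : 0 < N)
    (L : Set ℝ) (hLmeas : MeasurableSet L) (hLint : OrdConnected L)
    (hmass : ∫ y in L, Real.exp (-(y - x) ^ 2 / (2 * ε)) = 1 / N) :
    (N : ℝ) * ∫ y in L,
        (y - (N : ℝ) * ∫ z in L, z * Real.exp (-(z - x) ^ 2 / (2 * ε))) ^ 2
          * Real.exp (-(y - x) ^ 2 / (2 * ε)) ≤ ε := by
  exact gauss_aux x ε hε N hN L hLmeas hLint _ rfl hmass

end PaperOT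
end
end

section
/- Local isometry of the embedding of point configurations into Wasserstein space: Let X = (x₁,…,x_N) ∈ ℝ^{Nd} ∖ D_N (all points distinct). Then there exists δ > 0 such that for every perturbation V = (v₁,…,v_N) ∈ ℝ^{Nd} with ‖V‖ < δ, the optimal transport map between μ_X and μ_{X+V} sends xᵢ to xᵢ + vᵢ, and consequently W₂²(μ_X, μ_{X+V}) = (1/N)‖V‖². -/
open MeasureTheory Set Filter Topology
open scoped ENNReal

local notation "⟪" x ", " y "⟫" => @inner ℝ _ _ x y

noncomputable section

namespace PaperOT

variable {E : Type*} [NormedAddCommGroup E] [InnerProductSpace ℝ E]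
  [MeasureSpace E] [BorelSpace E]

variable [CompleteSpace E]

/-- map of `c • ∑ dirac (x i)` -/
lemma map_smul_sum_dirac {α β : Type*} [MeasurableSpace α] [MeasurableSpace β] {N : ℕ}
    (c : ℝ≥0∞) (x : Fin N → α) (g : α → β) (hg : Measurable g) :
    ((c • ∑ i, Measure.dirac (x i)).map g) = c • ∑ i, Measure.dirac (g (x i)) := by
  rw [Measure.map_smul]
  congr 1
  induction (Finset.univ : Finset (Fin N)) using Finset.induction with
  | empty => simp [Measure.map_zero]
  | insert _ _ h ih => simp [Finset.sum_insert h, Measure.map_add _ _ hg, ih, Measure.map_dirac' hg]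

lemma integral_smul_sum_dirac {α : Type*} [MeasurableSpace α] {N : ℕ}
    (x : Fin N → α) (f : α → ℝ) (hf : StronglyMeasurable f) :
    ∫ a, f a ∂((N : ℝ≥0∞)⁻¹ • ∑ i, Measure.dirac (x i)) = (N : ℝ)⁻¹ * ∑ i, f (x i) := by
  have hint : ∀ i : Fin N, Integrable f (Measure.dirac (x i)) := by
    intro i
    refine ⟨hf.aestronglyMeasurable, ?_⟩
    rw [hasFiniteIntegral_def, lintegral_dirac' _ (f := fun a => ‖f a‖ₑ) hf.measurable.enorm]
    exact enorm_lt_top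
  rw [integral_smul_measure, integral_finset_sum_measure (fun i _ => hint i)]
  simp [integral_dirac' f _ hf, ENNReal.toReal_inv]

lemma smul_sum_dirac_singleton {α : Type*} [MeasurableSpace α] [MeasurableSingletonClass α]
    {N : ℕ} (x : Fin N → α) (hx : Function.Injective x) (c : ℝ≥0∞) (i : Fin N) :
    (c • ∑ j, Measure.dirac (x j)) {x i} = c := by
  rw [Measure.smul_apply, Measure.finset_sum_apply]
  rw [Finset.sum_eq_single_of_mem i (Finset.mem_univ i)]
  · simp
  · intro j _ hj
    rw [Measure.dirac_apply]
    simp [Set.indicator_apply, hx.ne hj]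

lemma smul_sum_dirac_null {α : Type*} [MeasurableSpace α] [MeasurableSingletonClass α]
    {N : ℕ} (x : Fin N → α) (c : ℝ≥0∞) (s : Set α) (hs : ∀ i, x i ∉ s) :
    (c • ∑ j, Measure.dirac (x j)) s = 0 := by
  rw [Measure.smul_apply, Measure.finset_sum_apply]
  have : ∀ j : Fin N, Measure.dirac (x j) s = 0 := by
    intro j; rw [Measure.dirac_apply]; simp [Set.indicator_apply, hs j]
  simp [this]

/-- local isometry of the embedding `X ↦ μ_X` of configurations of
distinct points into Wasserstein space.  For small perturbations `V`, the optimal map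
between `μ_X` and `μ_{X+V}` sends `xᵢ` to `xᵢ+vᵢ`, and
`W₂²(μ_X, μ_{X+V}) = (1/N)‖V‖²`. -/
theorem local_isometry_empirical {d N : ℕ}
    (X : Fin N → EuclideanSpace ℝ (Fin d)) (hX : Function.Injective X) :
    ∃ δ > (0 : ℝ), ∀ V : Fin N → EuclideanSpace ℝ (Fin d),
      Real.sqrt (∑ i, ‖V i‖ ^ 2) < δ →
      (∃ T : EuclideanSpace ℝ (Fin d) → EuclideanSpace ℝ (Fin d),
        (∀ i, T (X i) = X i + V i) ∧
        IsOptimalMap T (empMeasure X) (empMeasure (fun i => X i + V i))) ∧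
      W2sq (empMeasure X) (empMeasure (fun i => X i + V i)) =
        (N : ℝ)⁻¹ * ∑ i, ‖V i‖ ^ 2 := by
  classical
  obtain ⟨δ, hδpos, hsep⟩ :
      ∃ δ > (0:ℝ), ∀ i j : Fin N, i ≠ j → 3 * δ ≤ ‖X i - X j‖ := by
    set s := (Finset.univ : Finset (Fin N × Fin N)).filter (fun p => p.1 ≠ p.2) with hs
    by_cases hne : s.Nonempty
    · refine ⟨s.inf' hne (fun p => ‖X p.1 - X p.2‖) / 3, ?_, ?_⟩
      · have hpos : ∀ p ∈ s, 0 < ‖X p.1 - X p.2‖ := by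
          intro p hp
          have hpp : p.1 ≠ p.2 := (Finset.mem_filter.mp hp).2
          have : X p.1 - X p.2 ≠ 0 := sub_ne_zero.mpr (fun h => hpp (hX h))
          simpa using this
        have := (Finset.lt_inf'_iff hne (f := fun p => ‖X p.1 - X p.2‖)).mpr hpos
        linarith
      · intro i j hij
        have hmem : (i, j) ∈ s := by simp [hs, hij]
        have := Finset.inf'_le (f := fun p : Fin N × Fin N => ‖X p.1 - X p.2‖) hmem
        linarith
    · refine ⟨1, one_pos, fun i j hij => absurd ?_ hne⟩
      exact ⟨(i, j), by simp [hs, hij]⟩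
  refine ⟨δ, hδpos, ?_⟩
  intro V hV
  set Y : Fin N → EuclideanSpace ℝ (Fin d) := fun i => X i + V i with hY
  have hVi : ∀ i, ‖V i‖ < δ := by
    intro i
    have h1 : ‖V i‖ ^ 2 ≤ ∑ j, ‖V j‖ ^ 2 :=
      Finset.single_le_sum (f := fun j => ‖V j‖ ^ 2) (fun j _ => sq_nonneg _) (Finset.mem_univ i)
    calc ‖V i‖ = Real.sqrt (‖V i‖ ^ 2) := (Real.sqrt_sq (norm_nonneg _)).symm
      _ ≤ Real.sqrt (∑ j, ‖V j‖ ^ 2) := Real.sqrt_le_sqrt h1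
      _ < δ := hV
  have hXYi : ∀ i, ‖X i - Y i‖ = ‖V i‖ := by
    intro i
    have : X i - Y i = -V i := by simp only [hY]; abel
    rw [this, norm_neg]
  have hXY : ∀ i j, i ≠ j → 2 * δ ≤ ‖X i - Y j‖ := by
    intro i j hij
    have h1 := hsep i j hij
    have h2 : ‖X i - X j‖ - ‖V j‖ ≤ ‖X i - Y j‖ := by
      have he : X i - Y j = (X i - X j) - V j := by simp only [hY]; abel
      rw [he]
      exact norm_sub_norm_le _ _
    have h3 := hVi j
    linarith
  have hYinj : Function.Injective Y := by
    intro i j hij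
    by_contra hne
    have h1 : ‖Y i - Y j‖ = 0 := by rw [hij]; simp
    have h2 : ‖X i - X j‖ ≤ ‖Y i - Y j‖ + ‖V i - V j‖ := by
      have he : X i - X j = (Y i - Y j) - (V i - V j) := by simp only [hY]; abel
      rw [he]
      exact norm_sub_le _ _
    have h3 : ‖V i - V j‖ ≤ ‖V i‖ + ‖V j‖ := norm_sub_le _ _
    have h4 := hsep i j hne
    have h5 := hVi i
    have h6 := hVi j
    linarith
  have hcostij : ∀ i j, ‖V i‖ ^ 2 ≤ ‖X i - Y j‖ ^ 2 := by
    intro i j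
    by_cases h : i = j
    · subst h; rw [hXYi]
    · have h1 := hXY i j h
      have h2 := hVi i
      have : ‖V i‖ ≤ ‖X i - Y j‖ := by linarith
      exact pow_le_pow_left₀ (norm_nonneg _) this 2
  -- notation
  set μ := empMeasure X with hμ
  set ν := empMeasure Y with hν
  set c₀ : ℝ := (N : ℝ)⁻¹ * ∑ i, ‖V i‖ ^ 2 with hc₀
  -- the transport map
  set T : (EuclideanSpace ℝ (Fin d)) → (EuclideanSpace ℝ (Fin d)) := fun x => x + ∑ i, Set.indicator {X i} (fun _ => V i) x with hT
  have hTm : Measurable T :=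
    measurable_id.add (Finset.measurable_sum _ fun i _ =>
      measurable_const.indicator (measurableSet_singleton _))
  have hTX : ∀ i, T (X i) = X i + V i := by
    intro i
    have hs : ∑ j, Set.indicator {X j} (fun _ => V j) (X i) = V i := by
      rw [Finset.sum_eq_single_of_mem i (Finset.mem_univ i)]
      · simp
      · intro j _ hj
        exact Set.indicator_of_notMem
          (by simp only [Set.mem_singleton_iff]; exact fun h => hj (hX h.symm)) _
    simp only [hT, hs]
  -- the diagonal coupling
  set π₀ : Measure ((EuclideanSpace ℝ (Fin d)) × (EuclideanSpace ℝ (Fin d))) := (N : ℝ≥0∞)⁻¹ • ∑ i, Measure.dirac (X i, Y i) with hπ₀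
  have hπ₀c : IsCoupling π₀ μ ν := by
    constructor
    · have := map_smul_sum_dirac (N : ℝ≥0∞)⁻¹ (fun i => (X i, Y i)) Prod.fst measurable_fst
      simpa [hπ₀, hμ, empMeasure] using this
    · have := map_smul_sum_dirac (N : ℝ≥0∞)⁻¹ (fun i => (X i, Y i)) Prod.snd measurable_snd
      simpa [hπ₀, hν, empMeasure] using this
  have hπ₀cost : ∫ p : (EuclideanSpace ℝ (Fin d)) × (EuclideanSpace ℝ (Fin d)), ‖p.1 - p.2‖ ^ 2 ∂π₀ = c₀ := by
    have hsm : StronglyMeasurable fun p : (EuclideanSpace ℝ (Fin d)) × (EuclideanSpace ℝ (Fin d)) => ‖p.1 - p.2‖ ^ 2 :=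
      ((continuous_fst.sub continuous_snd).norm.pow 2).stronglyMeasurable
    have := integral_smul_sum_dirac (fun i => (X i, Y i)) (fun p => ‖p.1 - p.2‖ ^ 2) hsm
    rw [hπ₀, this, hc₀]
    congr 1
    exact Finset.sum_congr rfl fun i _ => by
      show ‖X i - Y i‖ ^ 2 = ‖V i‖ ^ 2
      rw [hXYi i]
  -- lower bound for an arbitrary coupling
  have hlow : ∀ c ∈ {c : ℝ | ∃ π : Measure ((EuclideanSpace ℝ (Fin d)) × (EuclideanSpace ℝ (Fin d))), IsCoupling π μ ν ∧
      c = ∫ p, ‖p.1 - p.2‖ ^ 2 ∂π}, c₀ ≤ c := by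
    rintro c ⟨π, ⟨hfst, hsnd⟩, rfl⟩
    have hπuniv : π Set.univ ≠ ⊤ := by
      have h1 : π Set.univ = μ Set.univ := by
        rw [← hfst, Measure.map_apply measurable_fst MeasurableSet.univ, Set.preimage_univ]
      rw [h1, hμ, empMeasure, Measure.smul_apply, Measure.finset_sum_apply]
      simp only [measure_univ, Finset.sum_const, Finset.card_univ, Fintype.card_fin, nsmul_eq_mul,
        mul_one, smul_eq_mul]
      by_cases hN : (N : ℝ≥0∞) = 0
      · simp [hN]
      · exact ENNReal.mul_ne_top (ENNReal.inv_ne_top.mpr hN) (ENNReal.natCast_ne_top N)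
    haveI : IsFiniteMeasure π := ⟨lt_top_iff_ne_top.mpr hπuniv⟩
    have hAnull : π ((Set.range X)ᶜ ×ˢ (Set.univ : Set (EuclideanSpace ℝ (Fin d)))) = 0 := by
      rw [Set.prod_univ, ← Measure.map_apply measurable_fst
        (Set.finite_range X).measurableSet.compl, hfst, hμ, empMeasure]
      exact smul_sum_dirac_null X _ _ (fun i h => h (Set.mem_range_self i))
    have hBnull : π ((Set.univ : Set (EuclideanSpace ℝ (Fin d))) ×ˢ (Set.range Y)ᶜ) = 0 := by
      rw [Set.univ_prod, ← Measure.map_apply measurable_snd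
        (Set.finite_range Y).measurableSet.compl, hsnd, hν, empMeasure]
      exact smul_sum_dirac_null Y _ _ (fun i h => h (Set.mem_range_self i))
    have hKnull : π ((Set.range X ×ˢ Set.range Y)ᶜ) = 0 := by
      refine measure_mono_null ?_ (measure_union_null hAnull hBnull)
      intro p hp
      simp only [Set.mem_compl_iff, Set.mem_prod, not_and_or, Set.mem_union,
        Set.mem_univ, and_true, true_and] at hp ⊢
      exact hp
    set F : (EuclideanSpace ℝ (Fin d)) × (EuclideanSpace ℝ (Fin d)) → ℝ :=
      fun p => ∑ i, ∑ j, Set.indicator {(X i, Y j)} (fun _ => ‖X i - Y j‖ ^ 2) p with hF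
    have hFval : ∀ i j, F (X i, Y j) = ‖X i - Y j‖ ^ 2 := by
      intro i j
      show (∑ k, ∑ l, Set.indicator {(X k, Y l)} (fun _ => ‖X k - Y l‖ ^ 2)
        ((X i, Y j) : EuclideanSpace ℝ (Fin d) × EuclideanSpace ℝ (Fin d))) = _
      rw [Finset.sum_eq_single_of_mem i (Finset.mem_univ i)]
      · rw [Finset.sum_eq_single_of_mem j (Finset.mem_univ j)]
        · simp
        · intro l _ hl
          refine Set.indicator_of_notMem ?_ _
          simp only [Set.mem_singleton_iff, Prod.mk.injEq, not_and]
          exact fun _ h => hl (hYinj h.symm)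
      · intro k _ hk
        refine Finset.sum_eq_zero fun l _ => Set.indicator_of_notMem ?_ _
        simp only [Set.mem_singleton_iff, Prod.mk.injEq, not_and]
        exact fun h => absurd (hX h.symm) hk
    have hae : (fun p : (EuclideanSpace ℝ (Fin d)) × (EuclideanSpace ℝ (Fin d)) => ‖p.1 - p.2‖ ^ 2) =ᵐ[π] F := by
      rw [Filter.EventuallyEq, ae_iff]
      refine measure_mono_null ?_ hKnull
      intro p hp
      simp only [Set.mem_setOf_eq] at hp
      simp only [Set.mem_compl_iff, Set.mem_prod, not_and_or]
      by_contra hcon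
      push_neg at hcon
      obtain ⟨⟨i, hi⟩, ⟨j, hj⟩⟩ := hcon
      apply hp
      have hpe : p = (X i, Y j) := by
        ext1
        · exact hi.symm
        · exact hj.symm
      rw [hpe, hFval i j]
    have hFint : Integrable F π := by
      refine integrable_finset_sum _ fun i _ => integrable_finset_sum _ fun j _ => ?_
      exact (integrable_const _).indicator (measurableSet_singleton _)
    have hcosteq : ∫ p, ‖p.1 - p.2‖ ^ 2 ∂π
        = ∑ i, ∑ j, (π {(X i, Y j)}).toReal * ‖X i - Y j‖ ^ 2 := by
      rw [integral_congr_ae hae, hF]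
      rw [integral_finset_sum _ fun i _ => integrable_finset_sum _ fun j _ =>
        (integrable_const _).indicator (measurableSet_singleton _)]
      refine Finset.sum_congr rfl fun i _ => ?_
      rw [integral_finset_sum _ fun j _ => (integrable_const _).indicator (measurableSet_singleton _)]
      refine Finset.sum_congr rfl fun j _ => ?_
      rw [integral_indicator_const _ (measurableSet_singleton _)]
      simp [smul_eq_mul, measureReal_def]
    have hrow : ∀ i, ∑ j, (π {(X i, Y j)}).toReal = (N : ℝ)⁻¹ := by
      intro i
      have h1 : π ({X i} ×ˢ (Set.univ : Set (EuclideanSpace ℝ (Fin d)))) = (N : ℝ≥0∞)⁻¹ := by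
        rw [Set.prod_univ, ← Measure.map_apply measurable_fst (measurableSet_singleton _), hfst,
          hμ, empMeasure]
        exact smul_sum_dirac_singleton X hX _ i
      have h2 : π ({X i} ×ˢ (Set.univ : Set (EuclideanSpace ℝ (Fin d)))) = π ({X i} ×ˢ Set.range Y) := by
        refine le_antisymm ?_ (measure_mono (Set.prod_mono_right (Set.subset_univ _)))
        calc π ({X i} ×ˢ (Set.univ : Set (EuclideanSpace ℝ (Fin d))))
            ≤ π ({X i} ×ˢ Set.range Y ∪ (Set.univ : Set (EuclideanSpace ℝ (Fin d))) ×ˢ (Set.range Y)ᶜ) := by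
              refine measure_mono ?_
              intro p hp
              rcases Classical.em (p.2 ∈ Set.range Y) with hmem | hmem
              · exact Or.inl ⟨hp.1, hmem⟩
              · exact Or.inr ⟨trivial, hmem⟩
          _ ≤ π ({X i} ×ˢ Set.range Y) + π ((Set.univ : Set (EuclideanSpace ℝ (Fin d))) ×ˢ (Set.range Y)ᶜ) :=
              measure_union_le _ _
          _ = π ({X i} ×ˢ Set.range Y) := by rw [hBnull, add_zero]
      have h3 : π ({X i} ×ˢ Set.range Y) = ∑ j, π {(X i, Y j)} := by
        have he : {X i} ×ˢ Set.range Y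
            = ⋃ j ∈ (Finset.univ : Finset (Fin N)), {(X i, Y j)} := by
          ext p
          simp only [Set.mem_prod, Set.mem_singleton_iff, Set.mem_range, Set.mem_iUnion,
            Finset.mem_univ, exists_const, exists_prop, true_and]
          constructor
          · rintro ⟨h1, j, hj⟩
            exact ⟨j, by ext1 <;> simp [h1, hj.symm]⟩
          · rintro ⟨j, rfl⟩
            exact ⟨rfl, j, rfl⟩
        rw [he, measure_biUnion_finset ?_ fun j _ => measurableSet_singleton _]
        intro j _ l _ hjl
        simp only [Set.disjoint_singleton_left, Set.mem_singleton_iff, Prod.mk.injEq, not_and]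
        exact fun _ h => hjl (hYinj h)
      have hne : ∀ j ∈ (Finset.univ : Finset (Fin N)), π {(X i, Y j)} ≠ ⊤ :=
        fun j _ => ((measure_mono (Set.subset_univ _)).trans_lt
          (lt_top_iff_ne_top.mpr hπuniv)).ne
      calc ∑ j, (π {(X i, Y j)}).toReal = (∑ j, π {(X i, Y j)}).toReal :=
            (ENNReal.toReal_sum hne).symm
        _ = (π ({X i} ×ˢ (Set.univ : Set (EuclideanSpace ℝ (Fin d))))).toReal := by rw [h2, h3]
        _ = (N : ℝ)⁻¹ := by rw [h1]; simp [ENNReal.toReal_inv]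
    calc c₀ = ∑ i, (∑ j, (π {(X i, Y j)}).toReal) * ‖V i‖ ^ 2 := by
          rw [hc₀, Finset.mul_sum]
          exact Finset.sum_congr rfl fun i _ => by rw [hrow i]
      _ = ∑ i, ∑ j, (π {(X i, Y j)}).toReal * ‖V i‖ ^ 2 := by
          exact Finset.sum_congr rfl fun i _ => Finset.sum_mul _ _ _
      _ ≤ ∑ i, ∑ j, (π {(X i, Y j)}).toReal * ‖X i - Y j‖ ^ 2 :=
          Finset.sum_le_sum fun i _ => Finset.sum_le_sum fun j _ =>
            mul_le_mul_of_nonneg_left (hcostij i j) ENNReal.toReal_nonneg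
      _ = ∫ p, ‖p.1 - p.2‖ ^ 2 ∂π := hcosteq.symm
  have hmem : c₀ ∈ {c : ℝ | ∃ π : Measure ((EuclideanSpace ℝ (Fin d)) × (EuclideanSpace ℝ (Fin d))), IsCoupling π μ ν ∧
      c = ∫ p, ‖p.1 - p.2‖ ^ 2 ∂π} := ⟨π₀, hπ₀c, hπ₀cost.symm⟩
  have hW : W2sq μ ν = c₀ :=
    le_antisymm (csInf_le ⟨c₀, fun c hc => hlow c hc⟩ hmem) (le_csInf ⟨c₀, hmem⟩ hlow)
  refine ⟨⟨T, hTX, hTm, ?_, ?_⟩, hW⟩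
  · rw [hμ, hν, empMeasure, empMeasure, map_smul_sum_dirac _ X T hTm]
    congr 1
    exact Finset.sum_congr rfl fun i _ => by rw [hTX i]
  · have hsm : StronglyMeasurable fun x : (EuclideanSpace ℝ (Fin d)) => ‖x - T x‖ ^ 2 :=
      ((measurable_id.sub hTm).norm.pow_const 2).stronglyMeasurable
    have hi : ∫ x, ‖x - T x‖ ^ 2 ∂μ = c₀ := by
      rw [hμ, empMeasure, integral_smul_sum_dirac X _ hsm, hc₀]
      congr 1
      refine Finset.sum_congr rfl fun i _ => ?_
      rw [hTX i]
      have hx : X i - (X i + V i) = -V i := by abel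
      rw [hx, norm_neg]
    rw [hi, hW]


end PaperOT
end
end
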